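/- arXiv:1410.6587 — 6 statements merged into one kernel-verified Lean document; each statement's English description precedes it below -/
import Mathlib

section
/- Let \Omega A be a differential calculus over an algebra A with integral forms I_k A = Hom_A(\Omega^k A, A) (right A-module maps), and let \nabla : I_1 A \to A be a divergence, i.e. \nabla(\phi \cdot a) = \nabla(\phi)a + \phi(da) for all \phi \in I_1 A, a \in A, where (\phi \cdot a)(\omega) = \phi(a\omega). Define \nabla_n : I_{n+1}A \to I_n A by \nabla_n(\phi)(\omega) = \nabla(\phi \cdot \omega) + (-1)^{n+1}\phi(d\omega), where (\phi\cdot\omega)(\omega') = \phi(\omega \wedge \omega'). Then for all \phi \in I_{m+n+1}A and \omega \in \Omega^m A, the Leibniz rule \nabla_n(\phi \cdot \omega) = \nabla_{m+n}(\phi)\cdot\omega + (-1)^{m+n}\phi \cdot d\omega holds. -/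
/-! Both sides evaluate `∇` at the same form, since `(φ·ω)·ω' = φ·(ω ∧ ω')`; the divergence terms
therefore cancel and the identity reduces to the graded Leibniz rule for `d(ω ∧ ω')`, the signs
matching because `(-1)^(m+n+1) (-1)^m = (-1)^(n+1)`. -/

theorem neg_one_pow_add_mul_neg_one_pow {R : Type*} [Monoid R] [HasDistribNeg R] (m n : ℕ) :
    (-1 : R) ^ (m + n) * (-1) ^ m = (-1) ^ n := by
  rw [← pow_add, show m + n + m = n + 2 * m by ring, pow_add, pow_mul, neg_one_sq, one_pow,
    mul_one]

theorem divergence_leibniz_general (Ω : Type*) [Ring Ω] [Algebra ℂ Ω]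
    (G : ℕ → Submodule ℂ Ω)
    (d : Ω →ₗ[ℂ] Ω)
    (hLeib : ∀ m : ℕ, ∀ x ∈ G m, ∀ y : Ω,
      d (x * y) = d x * y + (-1 : ℂ) ^ m • (x * d y))
    (nabla : (Ω →ₗ[ℂ] Ω) → Ω)
    (m n : ℕ) (φ : Ω →ₗ[ℂ] Ω)
    (ω : Ω) (hω : ω ∈ G m) :
    ∀ ω' ∈ G n,
      nabla ((φ ∘ₗ LinearMap.mulLeft ℂ ω) ∘ₗ LinearMap.mulLeft ℂ ω')
          + (-1 : ℂ) ^ (n + 1) • φ (ω * d ω')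
        = (nabla (φ ∘ₗ LinearMap.mulLeft ℂ (ω * ω'))
            + (-1 : ℂ) ^ (m + n + 1) • φ (d (ω * ω')))
          + (-1 : ℂ) ^ (m + n) • φ (d ω * ω') := by
  intro ω' _
  have hsign : (-1 : ℂ) ^ (m + n + 1) * (-1) ^ m = (-1) ^ (n + 1) := by
    rw [add_assoc]; exact neg_one_pow_add_mul_neg_one_pow m (n + 1)
  rw [LinearMap.comp_assoc, ← LinearMap.mulLeft_mul, hLeib m ω hω ω', map_add, map_smul,
    smul_add, smul_smul, hsign, pow_succ (-1 : ℂ) (m + n), mul_neg_one, neg_smul]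
  abel

/-- the Leibniz rule for the extension of a divergence to higher
integral forms.  The differential graded algebra `Ω A` is modelled as a
ℂ-algebra `Ω` with graded components `G n` (with `G 0` playing the role of `A`),
a degree-one differential `d` satisfying the graded Leibniz rule, and a
divergence `∇ : I₁A → A` (defined on right `A`-linear maps).  Integral forms
`φ ∈ I_k A` are right `A`-linear maps, the action being `(φ·ω)(ω') = φ(ω ∧ ω')`,
i.e. `φ ∘ₗ mulLeft ω`.  The identity
`∇ₙ(φ·ω) = ∇_{m+n}(φ)·ω + (-1)^{m+n} φ·dω` is stated evaluated at an
arbitrary `ω' ∈ Ωⁿ A`, with `∇ₖ(ψ)(ω') = ∇(ψ·ω') + (-1)^{k+1} ψ(dω')`. -/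
theorem divergence_leibniz (Ω : Type*) [Ring Ω] [Algebra ℂ Ω]
    (G : ℕ → Submodule ℂ Ω)
    (hGmul : ∀ m n : ℕ, ∀ x ∈ G m, ∀ y ∈ G n, x * y ∈ G (m + n))
    (d : Ω →ₗ[ℂ] Ω)
    (hdG : ∀ n : ℕ, ∀ x ∈ G n, d x ∈ G (n + 1))
    (hLeib : ∀ m : ℕ, ∀ x ∈ G m, ∀ y : Ω,
      d (x * y) = d x * y + (-1 : ℂ) ^ m • (x * d y))
    (nabla : (Ω →ₗ[ℂ] Ω) → Ω)
    (hdiv : ∀ φ : Ω →ₗ[ℂ] Ω, (∀ x : Ω, ∀ a ∈ G 0, φ (x * a) = φ x * a) →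
      ∀ a ∈ G 0, nabla (φ ∘ₗ LinearMap.mulLeft ℂ a) = nabla φ * a + φ (d a))
    (m n : ℕ) (φ : Ω →ₗ[ℂ] Ω)
    (hφ : ∀ x : Ω, ∀ a ∈ G 0, φ (x * a) = φ x * a)
    (ω : Ω) (hω : ω ∈ G m) :
    ∀ ω' ∈ G n,
      nabla ((φ ∘ₗ LinearMap.mulLeft ℂ ω) ∘ₗ LinearMap.mulLeft ℂ ω')
          + (-1 : ℂ) ^ (n + 1) • φ (ω * d ω')
        = (nabla (φ ∘ₗ LinearMap.mulLeft ℂ (ω * ω'))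
            + (-1 : ℂ) ^ (m + n + 1) • φ (d (ω * ω')))
          + (-1 : ℂ) ^ (m + n) • φ (d ω * ω') :=
  divergence_leibniz_general Ω G d hLeib nabla m n φ ω hω
end

section
/- Every algebra automorphism \nu of A = C[x,y]/(xy) satisfies either (\nu(x) = ax and \nu(y) = by) or (\nu(x) = ay and \nu(y) = bx) for some nonzero complex scalars a, b. -/
/-- The algebra `A = ℂ[x,y]/(xy)`. -/
noncomputable def PillowBase : Type :=
  MvPolynomial (Fin 2) ℂ ⧸
    Ideal.span {(MvPolynomial.X 0 * MvPolynomial.X 1 : MvPolynomial (Fin 2) ℂ)}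

noncomputable instance : CommRing PillowBase :=
  inferInstanceAs (CommRing (MvPolynomial (Fin 2) ℂ ⧸ _))

noncomputable instance : Algebra ℂ PillowBase :=
  inferInstanceAs (Algebra ℂ (MvPolynomial (Fin 2) ℂ ⧸ _))

/-- The class of `x` in `ℂ[x,y]/(xy)`. -/
noncomputable def PillowBase.x : PillowBase :=
  Ideal.Quotient.mk _ (MvPolynomial.X 0)

/-- The class of `y` in `ℂ[x,y]/(xy)`. -/
noncomputable def PillowBase.y : PillowBase :=
  Ideal.Quotient.mk _ (MvPolynomial.X 1)

/-!
Write `toXAxis, toYAxis : A → ℂ[X]` for the restrictions to the two branches `y = 0` and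
`x = 0`. They are jointly injective: every `z` equals `p(x) + q(y) - c` with `p = toXAxis z`,
`q = toYAxis z` and `c = p(0) = q(0)`, because `x q(y) = c x` and `y p(x) = c y`.
An automorphism `ν` sends `x, y` to generators `u, v` with `u v = 0`; as `ℂ[X]` is a domain, on
each branch one of `u, v` vanishes, and they cannot both vanish on the same branch. If `v`
vanishes on the branch `y = 0`, then the restriction of `u` alone generates `ℂ[X]`, so it has
degree one; it has no constant term since `u` vanishes on the other branch, hence `u` is a
nonzero multiple of `x`.
-/

open Polynomial

theorem Polynomial.exists_eq_C_mul_X_of_adjoin_eq_top {R : Type*} [CommRing R] [IsDomain R]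
    {P : R[X]} (hP : Algebra.adjoin R {P} = ⊤) (h0 : P.coeff 0 = 0) :
    ∃ a ≠ 0, P = C a * X := by
  rw [Algebra.adjoin_singleton_eq_range_aeval] at hP
  obtain ⟨F, hF⟩ : X ∈ (aeval P).range := hP ▸ Algebra.mem_top
  have hdeg : F.natDegree * P.natDegree = 1 := by
    rw [← natDegree_comp, comp_eq_aeval, ← natDegree_X (R := R)]; exact congrArg natDegree hF
  have hP1 : P.natDegree = 1 := Nat.eq_one_of_mul_eq_one_left hdeg
  refine ⟨P.leadingCoeff,
    leadingCoeff_ne_zero.mpr (ne_zero_of_natDegree_gt (hP1 ▸ one_pos)), ?_⟩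
  conv_lhs => rw [eq_X_add_C_of_natDegree_le_one hP1.le, h0, C_0, add_zero]
  rw [leadingCoeff, hP1]

theorem Algebra.adjoin_image_eq_top {R A B : Type*} [CommSemiring R] [Semiring A] [Semiring B]
    [Algebra R A] [Algebra R B] {f : A →ₐ[R] B} (hf : Function.Surjective f) {s : Set A}
    (hs : Algebra.adjoin R s = ⊤) : Algebra.adjoin R (f '' s) = ⊤ := by
  rw [Algebra.adjoin_image, hs, Algebra.map_top, AlgHom.range_eq_top]
  exact hf

namespace PillowBase

noncomputable def mk : MvPolynomial (Fin 2) ℂ →ₐ[ℂ] PillowBase :=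
  Ideal.Quotient.mkₐ ℂ _

theorem mk_surjective : Function.Surjective mk := Ideal.Quotient.mkₐ_surjective ℂ _

theorem mk_X_zero : mk (MvPolynomial.X 0) = x := rfl
theorem mk_X_one : mk (MvPolynomial.X 1) = y := rfl

theorem x_mul_y : x * y = 0 := by
  rw [← mk_X_zero, ← mk_X_one, ← map_mul]
  exact Ideal.Quotient.eq_zero_iff_mem.mpr (Ideal.subset_span rfl)

@[ext]
theorem algHom_ext {B : Type*} [Semiring B] [Algebra ℂ B] {f g : PillowBase →ₐ[ℂ] B}
    (hx : f x = g x) (hy : f y = g y) : f = g := by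
  refine Ideal.Quotient.algHom_ext ℂ (MvPolynomial.algHom_ext fun i => ?_)
  fin_cases i
  exacts [hx, hy]

theorem adjoin_x_y : Algebra.adjoin ℂ {x, y} = ⊤ := by
  have h := Algebra.adjoin_image_eq_top mk_surjective
    (MvPolynomial.adjoin_range_X (R := ℂ) (σ := Fin 2))
  rwa [← Set.range_comp, show Set.range (mk ∘ MvPolynomial.X) = {x, y} by
    ext; simp [Fin.exists_fin_two, eq_comm, mk_X_zero, mk_X_one]] at h

noncomputable def lift {B : Type*} [CommRing B] [Algebra ℂ B] (a b : B) (hab : a * b = 0) :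
    PillowBase →ₐ[ℂ] B :=
  Ideal.Quotient.liftₐ _ (MvPolynomial.aeval ![a, b]) fun f hf => by
    obtain ⟨g, rfl⟩ := Ideal.mem_span_singleton'.mp hf
    simp [hab]

section lift

variable {B : Type*} [CommRing B] [Algebra ℂ B] (a b : B) (hab : a * b = 0)

@[simp]
theorem lift_x : lift a b hab x = a := by
  show MvPolynomial.aeval ![a, b] (MvPolynomial.X 0) = a
  simp

@[simp]
theorem lift_y : lift a b hab y = b := by
  show MvPolynomial.aeval ![a, b] (MvPolynomial.X 1) = b
  simp

end lift

noncomputable def toXAxis : PillowBase →ₐ[ℂ] ℂ[X] := lift X 0 (mul_zero _)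

noncomputable def toYAxis : PillowBase →ₐ[ℂ] ℂ[X] := lift 0 X (zero_mul _)

@[simp] theorem toXAxis_x : toXAxis x = X := lift_x ..
@[simp] theorem toXAxis_y : toXAxis y = 0 := lift_y ..
@[simp] theorem toYAxis_x : toYAxis x = 0 := lift_x ..
@[simp] theorem toYAxis_y : toYAxis y = X := lift_y ..

theorem toXAxis_surjective : Function.Surjective toXAxis :=
  fun p => ⟨aeval x p, by rw [← aeval_algHom_apply, toXAxis_x, aeval_X_left_apply]⟩

theorem toYAxis_surjective : Function.Surjective toYAxis :=
  fun p => ⟨aeval y p, by rw [← aeval_algHom_apply, toYAxis_y, aeval_X_left_apply]⟩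

theorem coeff_zero_toXAxis_eq (z : PillowBase) : (toXAxis z).coeff 0 = (toYAxis z).coeff 0 := by
  have h : (aeval (0 : ℂ)).comp toXAxis = (aeval 0).comp toYAxis := by ext <;> simp
  simpa [coeff_zero_eq_eval_zero] using AlgHom.congr_fun h z

theorem aeval_y_mul_x (q : ℂ[X]) : aeval y q * x = algebraMap ℂ _ (q.coeff 0) * x := by
  conv_lhs => rw [← X_mul_divX_add q]
  rw [map_add, map_mul, aeval_X, aeval_C, add_mul, mul_right_comm, mul_comm y x, x_mul_y,
    zero_mul, zero_add]

theorem aeval_x_mul_y (p : ℂ[X]) : aeval x p * y = algebraMap ℂ _ (p.coeff 0) * y := by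
  conv_lhs => rw [← X_mul_divX_add p]
  rw [map_add, map_mul, aeval_X, aeval_C, add_mul, mul_right_comm, x_mul_y, zero_mul, zero_add]

theorem eq_aeval_toXAxis_add_aeval_toYAxis (z : PillowBase) :
    z = aeval x (toXAxis z) + aeval y (toYAxis z) - algebraMap ℂ _ ((toXAxis z).coeff 0) := by
  obtain ⟨f, rfl⟩ := mk_surjective z
  induction f using MvPolynomial.induction_on with
  | C c => simp [← MvPolynomial.algebraMap_eq]
  | add f g hf hg =>
    rw [map_add]
    conv_lhs => rw [hf, hg]
    simp only [map_add, coeff_add]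
    abel
  | mul_X f i hf =>
    rw [map_mul]
    conv_lhs => rw [hf]
    fin_cases i
    · simp [mk_X_zero, sub_mul, add_mul, aeval_y_mul_x, coeff_zero_toXAxis_eq]
    · simp [mk_X_one, sub_mul, add_mul, aeval_x_mul_y]

theorem ext_toXAxis_toYAxis {z w : PillowBase} (hx : toXAxis z = toXAxis w)
    (hy : toYAxis z = toYAxis w) : z = w := by
  rw [eq_aeval_toXAxis_add_aeval_toYAxis z, eq_aeval_toXAxis_add_aeval_toYAxis w, hx, hy]

theorem x_ne_zero : x ≠ 0 := fun h => X_ne_zero (R := ℂ) (by simpa using congrArg toXAxis h)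

theorem y_ne_zero : y ≠ 0 := fun h => X_ne_zero (R := ℂ) (by simpa using congrArg toYAxis h)

theorem eq_smul_x_of_adjoin_eq_top {u v : PillowBase} (h : Algebra.adjoin ℂ {u, v} = ⊤)
    (hu : toYAxis u = 0) (hv : toXAxis v = 0) : ∃ a : ℂ, a ≠ 0 ∧ u = a • x := by
  have hgen : Algebra.adjoin ℂ {toXAxis u} = ⊤ := by
    have := Algebra.adjoin_image_eq_top toXAxis_surjective h
    rwa [Set.image_pair, hv, Set.pair_comm, Algebra.adjoin_insert_zero] at this
  obtain ⟨a, ha, hau⟩ :=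
    exists_eq_C_mul_X_of_adjoin_eq_top hgen (by rw [coeff_zero_toXAxis_eq, hu, coeff_zero])
  exact ⟨a, ha, ext_toXAxis_toYAxis (by simp [hau, smul_eq_C_mul]) (by simp [hu])⟩

theorem eq_smul_y_of_adjoin_eq_top {u v : PillowBase} (h : Algebra.adjoin ℂ {u, v} = ⊤)
    (hu : toXAxis u = 0) (hv : toYAxis v = 0) : ∃ a : ℂ, a ≠ 0 ∧ u = a • y := by
  have hgen : Algebra.adjoin ℂ {toYAxis u} = ⊤ := by
    have := Algebra.adjoin_image_eq_top toYAxis_surjective h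
    rwa [Set.image_pair, hv, Set.pair_comm, Algebra.adjoin_insert_zero] at this
  obtain ⟨a, ha, hau⟩ :=
    exists_eq_C_mul_X_of_adjoin_eq_top hgen (by rw [← coeff_zero_toXAxis_eq, hu, coeff_zero])
  exact ⟨a, ha, ext_toXAxis_toYAxis (by simp [hu]) (by simp [hau, smul_eq_C_mul])⟩

end PillowBase

open PillowBase in
/-- every algebra automorphism of `ℂ[x,y]/(xy)` either rescales
`x` and `y`, or swaps them up to nonzero scalars. -/
theorem pillowBase_automorphisms (ν : PillowBase ≃ₐ[ℂ] PillowBase) :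
    ∃ a b : ℂ, a ≠ 0 ∧ b ≠ 0 ∧
      ((ν PillowBase.x = a • PillowBase.x ∧ ν PillowBase.y = b • PillowBase.y) ∨
       (ν PillowBase.x = a • PillowBase.y ∧ ν PillowBase.y = b • PillowBase.x)) := by
  have hgen : Algebra.adjoin ℂ {ν x, ν y} = ⊤ := by
    have := Algebra.adjoin_image_eq_top (f := (ν : PillowBase →ₐ[ℂ] PillowBase))
      ν.surjective adjoin_x_y
    rwa [Set.image_pair] at this
  have hgen' : Algebra.adjoin ℂ {ν y, ν x} = ⊤ := Set.pair_comm (ν x) (ν y) ▸ hgen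
  have hmul : ν x * ν y = 0 := by rw [← map_mul, x_mul_y, map_zero]
  have hνx : ν x ≠ 0 := (map_ne_zero_iff _ ν.injective).mpr x_ne_zero
  have hνy : ν y ≠ 0 := (map_ne_zero_iff _ ν.injective).mpr y_ne_zero
  have hX : toXAxis (ν x) * toXAxis (ν y) = 0 := by rw [← map_mul, hmul, map_zero]
  have hY : toYAxis (ν x) * toYAxis (ν y) = 0 := by rw [← map_mul, hmul, map_zero]
  rcases mul_eq_zero.mp hX with hxX | hyX
  · have hyY : toYAxis (ν y) = 0 :=
      (mul_eq_zero.mp hY).resolve_left fun h =>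
        hνx (ext_toXAxis_toYAxis (by simpa) (by simpa))
    obtain ⟨a, ha, hxa⟩ := eq_smul_y_of_adjoin_eq_top hgen hxX hyY
    obtain ⟨b, hb, hyb⟩ := eq_smul_x_of_adjoin_eq_top hgen' hyY hxX
    exact ⟨a, b, ha, hb, Or.inr ⟨hxa, hyb⟩⟩
  · have hxY : toYAxis (ν x) = 0 :=
      (mul_eq_zero.mp hY).resolve_right fun h =>
        hνy (ext_toXAxis_toYAxis (by simpa) (by simpa))
    obtain ⟨a, ha, hxa⟩ := eq_smul_x_of_adjoin_eq_top hgen hxY hyX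
    obtain ⟨b, hb, hyb⟩ := eq_smul_y_of_adjoin_eq_top hgen' hyX hxY
    exact ⟨a, b, ha, hb, Or.inl ⟨hxa, hyb⟩⟩
end

section
/- In the noncommutative torus algebra with unitaries V, W satisfying VW = \lambda WV, the elements x = V+V*, y = W+W*, z = VW*+V*W satisfy xz - \bar\lambda zx = (1 - \bar\lambda^2) y and zy - \bar\lambda yz = (1 - \bar\lambda^2) x, where \bar\lambda = \lambda^{-1}. -/
/-!
Both relations are sums of two instances of one computation. If `b a = q a b` and `a` is
invertible, then with `x = a + a⁻¹`,
`x (a b) - q⁻¹ (a b) x = a² b + b - q⁻¹ (q a² b + q⁻¹ b) = (1 - q⁻²) b`,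
and symmetrically `(a b)(b + b⁻¹) - q⁻¹ (b + b⁻¹)(a b) = (1 - q⁻²) a`. The element
`z = V W* + V* W` splits into `V W*` and `V* W`, and each summand satisfies such a relation,
because `W* V = λ V W*` and `W V* = λ V* W` follow from `V W = λ W V`.
-/

section QCommute

variable {R A : Type*} [CommSemiring R] [Semiring A] [Algebra R A]

def QCommute (q : R) (a b : A) : Prop := a * b = q • (b * a)

variable {q : R} {a a' b b' : A}

theorem QCommute.inv_left (h : QCommute q a b) (ha : a' * a = 1) (ha' : a * a' = 1) :
    QCommute q b a' :=
  calc b * a' = a' * (a * b) * a' := by rw [← mul_assoc, ha, one_mul]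
    _ = q • (a' * b) := by
      rw [h, mul_smul_comm, smul_mul_assoc, mul_assoc, mul_assoc, ha', mul_one]

theorem QCommute.inv_right (h : QCommute q a b) (hb : b' * b = 1) (hb' : b * b' = 1) :
    QCommute q b' a :=
  calc b' * a = b' * (a * b) * b' := by rw [mul_assoc, mul_assoc, hb', mul_one]
    _ = q • (a * b') := by
      rw [h, mul_smul_comm, smul_mul_assoc, ← mul_assoc, hb, one_mul]

end QCommute

section TwistedComm

variable {R A : Type*} [CommRing R] [Ring A] [Algebra R A]

def twistedComm (c : R) (x y : A) : A := x * y - c • (y * x)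

theorem twistedComm_add_right (c : R) (x y z : A) :
    twistedComm c x (y + z) = twistedComm c x y + twistedComm c x z := by
  simp only [twistedComm, mul_add, add_mul, smul_add]
  abel

theorem twistedComm_add_left (c : R) (x y z : A) :
    twistedComm c (x + y) z = twistedComm c x z + twistedComm c y z := by
  simp only [twistedComm, mul_add, add_mul, smul_add]
  abel

end TwistedComm

section Inverses

variable {K A : Type*} [Field K] [Ring A] [Algebra K A] {q : K} {a a' b b' : A}

theorem twistedComm_add_inv_mul (hq : q ≠ 0) (h : QCommute q b a) (ha : a' * a = 1)
    (ha' : a * a' = 1) : twistedComm q⁻¹ (a + a') (a * b) = (1 - q⁻¹ ^ 2) • b := by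
  have hleft : (a + a') * (a * b) = a * a * b + b := by
    rw [add_mul, ← mul_assoc, ← mul_assoc, ha, one_mul]
  have hright : a * b * (a + a') = q • (a * a * b) + q⁻¹ • b := by
    have hba' : b * a' = q⁻¹ • (a' * b) := by
      rw [eq_inv_smul_iff₀ hq]; exact (h.inv_right ha ha').symm
    rw [mul_add, mul_assoc, mul_assoc, h, hba', mul_smul_comm, mul_smul_comm, ← mul_assoc,
      ← mul_assoc, ha', one_mul, mul_assoc]
  rw [twistedComm, hleft, hright, smul_add, smul_smul, inv_mul_cancel₀ hq, one_smul]
  module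

theorem twistedComm_mul_add_inv (hq : q ≠ 0) (h : QCommute q b a) (hb : b' * b = 1)
    (hb' : b * b' = 1) : twistedComm q⁻¹ (a * b) (b + b') = (1 - q⁻¹ ^ 2) • a := by
  have hleft : a * b * (b + b') = a * b * b + a := by
    rw [mul_add, mul_assoc a b b', hb', mul_one]
  have hright : (b + b') * (a * b) = q • (a * b * b) + q⁻¹ • a := by
    have hb'a : b' * a = q⁻¹ • (a * b') := by
      rw [eq_inv_smul_iff₀ hq]; exact (h.inv_left hb hb').symm
    rw [add_mul, ← mul_assoc, ← mul_assoc, h, hb'a, smul_mul_assoc, smul_mul_assoc, mul_assoc,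
      mul_assoc a b' b, hb, mul_one]
  rw [twistedComm, hleft, hright, smul_add, smul_smul, inv_mul_cancel₀ hq, one_smul]
  module

end Inverses

/-- in the noncommutative torus algebra (unitaries `V, W` with
`VW = λ WV`, `λ = e^{2πiθ}`), the elements `x = V+V*`, `y = W+W*`,
`z = VW* + V*W` satisfy `xz - λ̄ zx = (1-λ̄²) y` and `zy - λ̄ yz = (1-λ̄²) x`,
where `λ̄ = λ⁻¹`. -/
theorem ncTorus_xz_zy_relations (A : Type*) [Ring A] [Algebra ℂ A] (θ : ℝ) (lam : ℂ)
    (hlam : lam = Complex.exp (2 * Real.pi * θ * Complex.I))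
    (V Vs W Ws : A)
    (hVVs : V * Vs = 1) (hVsV : Vs * V = 1)
    (hWWs : W * Ws = 1) (hWsW : Ws * W = 1)
    (hcomm : V * W = lam • (W * V)) :
    ((V + Vs) * (V * Ws + Vs * W) - lam⁻¹ • ((V * Ws + Vs * W) * (V + Vs))
        = (1 - lam⁻¹ ^ 2) • (W + Ws)) ∧
    ((V * Ws + Vs * W) * (W + Ws) - lam⁻¹ • ((W + Ws) * (V * Ws + Vs * W))
        = (1 - lam⁻¹ ^ 2) • (V + Vs)) := by
  have hlam0 : lam ≠ 0 := hlam ▸ Complex.exp_ne_zero _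
  have hWsV : QCommute lam Ws V := QCommute.inv_right hcomm hWsW hWWs
  have hWVs : QCommute lam W Vs := QCommute.inv_left hcomm hVsV hVVs
  constructor
  · change twistedComm lam⁻¹ (V + Vs) (V * Ws + Vs * W) = _
    rw [twistedComm_add_right, twistedComm_add_inv_mul hlam0 hWsV hVsV hVVs, add_comm V Vs,
      twistedComm_add_inv_mul hlam0 hWVs hVVs hVsV, smul_add, add_comm]
  · change twistedComm lam⁻¹ (V * Ws + Vs * W) (W + Ws) = _
    rw [twistedComm_add_left, twistedComm_mul_add_inv hlam0 hWVs hWsW hWWs, add_comm W Ws,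
      twistedComm_mul_add_inv hlam0 hWsV hWWs hWsW, smul_add]
end

section
/- In the noncommutative torus algebra with unitaries V, W satisfying VW = \lambda WV, the elements x = V+V*, y = W+W*, z = VW*+V*W satisfy x^2 + y^2 + \bar\lambda z^2 - xzy = 2(1 + \bar\lambda^2), where \bar\lambda = \lambda^{-1}. -/
/-!
Expanding, `x² = V² + 2 + V*²`, `y² = W² + 2 + W*²` and
`xzy = V² + V*² + W² + W*² + V²W*² + V*²W² + 2`, while commuting the letters of each word of `z²`
with `VW = λWV` gives `λ̄z² = V²W*² + V*²W² + 2λ̄²`. Every non-scalar word cancels in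
`x² + y² + λ̄z² - xzy`, leaving `2 + 2 + 2λ̄² - 2`.
-/

theorem add_sq_of_mul_eq_one {R : Type*} [Ring R] {a b : R} (hab : a * b = 1) (hba : b * a = 1) :
    (a + b) ^ 2 = a ^ 2 + b ^ 2 + 2 := by
  rw [pow_two, pow_two, pow_two, add_mul, mul_add, mul_add, hab, hba, ← one_add_one_eq_two]
  abel

/-- `Vs` and `Ws` play the roles of `V*` and `W*`. -/
structure IsNCTorusPair {K A : Type*} [Field K] [Ring A] [Algebra K A]
    (lam : K) (V Vs W Ws : A) : Prop where
  mul_vs : V * Vs = 1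
  vs_mul : Vs * V = 1
  mul_ws : W * Ws = 1
  ws_mul : Ws * W = 1
  comm : V * W = lam • (W * V)

namespace IsNCTorusPair

variable {K A : Type*} [Field K] [Ring A] [Algebra K A] {lam : K} {V Vs W Ws : A}

theorem ws_mul_v (h : IsNCTorusPair lam V Vs W Ws) : Ws * V = lam • (V * Ws) := by
  have := congrArg (fun a => Ws * a * Ws) h.comm
  simpa only [mul_assoc, h.mul_ws, mul_one, ← mul_assoc Ws W, h.ws_mul, one_mul,
    mul_smul_comm, smul_mul_assoc] using this

theorem w_mul_vs (h : IsNCTorusPair lam V Vs W Ws) : W * Vs = lam • (Vs * W) := by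
  have := congrArg (fun a => Vs * a * Vs) h.comm
  simpa only [mul_assoc, h.mul_vs, mul_one, ← mul_assoc Vs V, h.vs_mul, one_mul,
    mul_smul_comm, smul_mul_assoc] using this

theorem lam_ne_zero [Nontrivial A] (h : IsNCTorusPair lam V Vs W Ws) : lam ≠ 0 := by
  rintro rfl
  have hVW : V * W = 0 := by rw [h.comm, zero_smul]
  apply one_ne_zero (α := A)
  calc (1 : A) = Ws * (Vs * V) * W := by rw [h.vs_mul, mul_one, h.ws_mul]
    _ = Ws * Vs * (V * W) := by noncomm_ring
    _ = 0 := by rw [hVW, mul_zero]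

theorem vs_mul_ws (h : IsNCTorusPair lam V Vs W Ws) : Vs * Ws = lam • (Ws * Vs) := by
  have := congrArg (fun a => Vs * a * Vs) h.ws_mul_v
  simpa only [mul_assoc, h.mul_vs, mul_one, ← mul_assoc Vs V, h.vs_mul, one_mul,
    mul_smul_comm, smul_mul_assoc] using this

theorem w_mul_v (h : IsNCTorusPair lam V Vs W Ws) (hlam : lam ≠ 0) :
    W * V = lam⁻¹ • (V * W) := by
  rw [h.comm, smul_smul, inv_mul_cancel₀ hlam, one_smul]

theorem ws_mul_vs (h : IsNCTorusPair lam V Vs W Ws) (hlam : lam ≠ 0) :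
    Ws * Vs = lam⁻¹ • (Vs * Ws) := by
  rw [h.vs_mul_ws, smul_smul, inv_mul_cancel₀ hlam, one_smul]

theorem x_mul_z_mul_y (h : IsNCTorusPair lam V Vs W Ws) :
    (V + Vs) * (V * Ws + Vs * W) * (W + Ws)
      = V ^ 2 + Vs ^ 2 + W ^ 2 + Ws ^ 2 + V ^ 2 * Ws ^ 2 + Vs ^ 2 * W ^ 2 + 2 := by
  have hxz : (V + Vs) * (V * Ws + Vs * W) = V ^ 2 * Ws + Vs ^ 2 * W + W + Ws := by
    simp only [mul_add, add_mul, ← mul_assoc, h.mul_vs, h.vs_mul, one_mul, pow_two]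
    abel
  rw [hxz]
  simp only [mul_add, add_mul, mul_assoc, h.mul_ws, h.ws_mul, mul_one, pow_two]
  rw [← one_add_one_eq_two]
  abel

theorem z_sq (h : IsNCTorusPair lam V Vs W Ws) (hlam : lam ≠ 0) :
    (V * Ws + Vs * W) ^ 2 = lam • (V ^ 2 * Ws ^ 2 + Vs ^ 2 * W ^ 2) + (2 * lam⁻¹) • 1 := by
  have hVWsVWs : V * Ws * (V * Ws) = lam • (V ^ 2 * Ws ^ 2) := by
    rw [show V * Ws * (V * Ws) = V * (Ws * V) * Ws by noncomm_ring, h.ws_mul_v, mul_smul_comm,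
      smul_mul_assoc]
    noncomm_ring
  have hVWsVsW : V * Ws * (Vs * W) = lam⁻¹ • 1 := by
    rw [show V * Ws * (Vs * W) = V * (Ws * Vs) * W by noncomm_ring, h.ws_mul_vs hlam,
      mul_smul_comm, smul_mul_assoc, ← mul_assoc, h.mul_vs, one_mul, h.ws_mul]
  have hVsWVWs : Vs * W * (V * Ws) = lam⁻¹ • 1 := by
    rw [show Vs * W * (V * Ws) = Vs * (W * V) * Ws by noncomm_ring, h.w_mul_v hlam,
      mul_smul_comm, smul_mul_assoc, ← mul_assoc, h.vs_mul, one_mul, h.mul_ws]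
  have hVsWVsW : Vs * W * (Vs * W) = lam • (Vs ^ 2 * W ^ 2) := by
    rw [show Vs * W * (Vs * W) = Vs * (W * Vs) * W by noncomm_ring, h.w_mul_vs, mul_smul_comm,
      smul_mul_assoc]
    noncomm_ring
  rw [pow_two, add_mul, mul_add, mul_add, hVWsVWs, hVWsVsW, hVsWVWs, hVsWVsW]
  module

end IsNCTorusPair

theorem ncTorus_sphere_relation_general (A : Type*) [Ring A] [Algebra ℂ A] (lam : ℂ)
    (V Vs W Ws : A)
    (hVVs : V * Vs = 1) (hVsV : Vs * V = 1)
    (hWWs : W * Ws = 1) (hWsW : Ws * W = 1)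
    (hcomm : V * W = lam • (W * V)) :
    (V + Vs) ^ 2 + (W + Ws) ^ 2 + lam⁻¹ • (V * Ws + Vs * W) ^ 2
        - (V + Vs) * (V * Ws + Vs * W) * (W + Ws)
      = (2 * (1 + lam⁻¹ ^ 2)) • (1 : A) := by
  cases subsingleton_or_nontrivial A
  · exact Subsingleton.elim _ _
  have h : IsNCTorusPair lam V Vs W Ws := ⟨hVVs, hVsV, hWWs, hWsW, hcomm⟩
  have hlam := h.lam_ne_zero
  rw [add_sq_of_mul_eq_one hVVs hVsV, add_sq_of_mul_eq_one hWWs hWsW, h.z_sq hlam,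
    h.x_mul_z_mul_y, smul_add, smul_smul, smul_smul, inv_mul_cancel₀ hlam, one_smul,
    show (2 : A) = (2 : ℂ) • 1 by rw [two_smul, one_add_one_eq_two]]
  module

/-- in the noncommutative torus algebra (unitaries `V, W` with
`VW = λ WV`, `λ = e^{2πiθ}`), the elements `x = V+V*`, `y = W+W*`,
`z = VW* + V*W` satisfy `x² + y² + λ̄ z² - xzy = 2(1+λ̄²)`, `λ̄ = λ⁻¹`. -/
theorem ncTorus_sphere_relation (A : Type*) [Ring A] [Algebra ℂ A] (θ : ℝ) (lam : ℂ)
    (hlam : lam = Complex.exp (2 * Real.pi * θ * Complex.I))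
    (V Vs W Ws : A)
    (hVVs : V * Vs = 1) (hVsV : Vs * V = 1)
    (hWWs : W * Ws = 1) (hWsW : Ws * W = 1)
    (hcomm : V * W = lam • (W * V)) :
    (V + Vs) ^ 2 + (W + Ws) ^ 2 + lam⁻¹ • (V * Ws + Vs * W) ^ 2
        - (V + Vs) * (V * Ws + Vs * W) * (W + Ws)
      = (2 * (1 + lam⁻¹ ^ 2)) • (1 : A) :=
  ncTorus_sphere_relation_general A lam V Vs W Ws hVVs hVsV hWWs hWsW hcomm
end

section
/- In the noncommutative torus algebra with unitaries V, W satisfying VW = \lambda WV, the elements \hat{x} = V - V*, \hat{y} = W - W*, \hat{z} = VW* - V*W satisfy \hat{x}^2 + \hat{y}^2 - \bar\lambda \hat{z}^2 - \hat{x} z \hat{y} = 2(\bar\lambda^2 - 1), where z = VW* + V*W and \bar\lambda = \lambda^{-1}. -/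
/-!
Conjugating `u v = c v u` by `u` or `v` gives the analogous skew-commutation rules for every
pair among `u, u⁻¹, v, v⁻¹`. With them every word in the expansion of the left-hand side can be
brought to the normal order `u^a v^b`; all words with `(a, b) ≠ (0, 0)` cancel, and the constant
terms sum to `2(c⁻¹² - 1)`.
-/

section Semiring

variable {R A : Type*} [CommSemiring R] [Semiring A] [Algebra R A] {c : R}

theorem mul_mul_eq_smul_of_mul_eq_smul {a b : A} (h : a * b = c • (b * a)) (t : A) :
    a * (b * t) = c • (b * (a * t)) := by
  rw [← mul_assoc, h, smul_mul_assoc, mul_assoc]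

namespace Units

theorem inv_mul_eq_smul_of_mul_eq_smul {a : A} {v : Aˣ} (h : a * v = c • (v * a)) :
    ↑v⁻¹ * a = c • (a * ↑v⁻¹) :=
  calc ↑v⁻¹ * a = ↑v⁻¹ * (a * v) * ↑v⁻¹ := by simp [mul_assoc]
    _ = c • (↑v⁻¹ * (v * a) * ↑v⁻¹) := by rw [h, mul_smul_comm, smul_mul_assoc]
    _ = c • (a * ↑v⁻¹) := by simp

theorem mul_inv_eq_smul_of_mul_eq_smul {u : Aˣ} {b : A} (h : u * b = c • (b * u)) :
    b * ↑u⁻¹ = c • (↑u⁻¹ * b) :=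
  calc b * ↑u⁻¹ = ↑u⁻¹ * (u * b) * ↑u⁻¹ := by simp
    _ = c • (↑u⁻¹ * (b * u) * ↑u⁻¹) := by rw [h, mul_smul_comm, smul_mul_assoc]
    _ = c • (↑u⁻¹ * b) := by simp [mul_assoc]

theorem inv_mul_inv_eq_smul_of_mul_eq_smul {u v : Aˣ} (h : (u * v : A) = c • (v * u : A)) :
    (↑u⁻¹ * ↑v⁻¹ : A) = c • (↑v⁻¹ * ↑u⁻¹ : A) :=
  inv_mul_eq_smul_of_mul_eq_smul (inv_mul_eq_smul_of_mul_eq_smul h)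

theorem ne_zero_of_mul_eq_smul [Nontrivial A] {u v : Aˣ} (h : (u * v : A) = c • (v * u : A)) :
    c ≠ 0 := by
  rintro rfl
  rw [zero_smul] at h
  exact (u * v).ne_zero (by exact_mod_cast h)

end Units

end Semiring

section Field

variable {K A : Type*} [Field K] [Ring A] [Algebra K A] {c : K}

theorem mul_eq_inv_smul_of_mul_eq_smul (hc : c ≠ 0) {a b : A} (h : a * b = c • (b * a)) :
    b * a = c⁻¹ • (a * b) := by
  rw [h, smul_smul, inv_mul_cancel₀ hc, one_smul]

namespace Units

variable {u v : Aˣ}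

theorem hat_sphere_relation_of_mul_eq_smul (h : (u * v : A) = c • (v * u : A)) :
    ((u : A) - ↑u⁻¹) ^ 2 + ((v : A) - ↑v⁻¹) ^ 2 - c⁻¹ • ((u : A) * ↑v⁻¹ - ↑u⁻¹ * v) ^ 2
        - ((u : A) - ↑u⁻¹) * (u * ↑v⁻¹ + ↑u⁻¹ * v) * (v - ↑v⁻¹)
      = (2 * (c⁻¹ ^ 2 - 1)) • (1 : A) := by
  cases subsingleton_or_nontrivial A
  · exact Subsingleton.elim _ _
  have hc := ne_zero_of_mul_eq_smul h
  have hvu := mul_mul_eq_smul_of_mul_eq_smul (mul_eq_inv_smul_of_mul_eq_smul hc h)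
  have hvinv_u := mul_mul_eq_smul_of_mul_eq_smul (inv_mul_eq_smul_of_mul_eq_smul h)
  have hv_uinv := mul_mul_eq_smul_of_mul_eq_smul (mul_inv_eq_smul_of_mul_eq_smul h)
  have hvinv_uinv := mul_mul_eq_smul_of_mul_eq_smul
    (mul_eq_inv_smul_of_mul_eq_smul hc (inv_mul_inv_eq_smul_of_mul_eq_smul h))
  simp only [sq, sub_mul, mul_sub, add_mul, mul_add, smul_sub, mul_assoc,
    mul_smul_comm, smul_smul, hvu, hvinv_u, hv_uinv, hvinv_uinv,
    Units.mul_inv_cancel_left, Units.inv_mul_cancel_left, Units.mul_inv, Units.inv_mul,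
    mul_one, inv_mul_cancel₀ hc, one_smul]
  module

end Units

end Field

theorem ncTorus_hat_sphere_relation_general (A : Type*) [Ring A] [Algebra ℂ A] (lam : ℂ)
    (V Vs W Ws : A)
    (hVVs : V * Vs = 1) (hVsV : Vs * V = 1)
    (hWWs : W * Ws = 1) (hWsW : Ws * W = 1)
    (hcomm : V * W = lam • (W * V)) :
    (V - Vs) ^ 2 + (W - Ws) ^ 2 - lam⁻¹ • (V * Ws - Vs * W) ^ 2
        - (V - Vs) * (V * Ws + Vs * W) * (W - Ws)
      = (2 * (lam⁻¹ ^ 2 - 1)) • (1 : A) :=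
  Units.hat_sphere_relation_of_mul_eq_smul (u := ⟨V, Vs, hVVs, hVsV⟩)
    (v := ⟨W, Ws, hWWs, hWsW⟩) hcomm

/-- in the noncommutative torus algebra (unitaries `V, W` with
`VW = λ WV`, `λ = e^{2πiθ}`), the elements `x̂ = V-V*`, `ŷ = W-W*`,
`ẑ = VW* - V*W` satisfy `x̂² + ŷ² - λ̄ ẑ² - x̂ z ŷ = 2(λ̄² - 1)`, where
`z = VW* + V*W` and `λ̄ = λ⁻¹`. -/
theorem ncTorus_hat_sphere_relation (A : Type*) [Ring A] [Algebra ℂ A] (θ : ℝ) (lam : ℂ)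
    (hlam : lam = Complex.exp (2 * Real.pi * θ * Complex.I))
    (V Vs W Ws : A)
    (hVVs : V * Vs = 1) (hVsV : Vs * V = 1)
    (hWWs : W * Ws = 1) (hWsW : Ws * W = 1)
    (hcomm : V * W = lam • (W * V)) :
    (V - Vs) ^ 2 + (W - Ws) ^ 2 - lam⁻¹ • (V * Ws - Vs * W) ^ 2
        - (V - Vs) * (V * Ws + Vs * W) * (W - Ws)
      = (2 * (lam⁻¹ ^ 2 - 1)) • (1 : A) :=
  ncTorus_hat_sphere_relation_general A lam V Vs W Ws hVVs hVsV hWWs hWsW hcomm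
end

section
/- Let e = (1/(2(\bar\lambda^2 - 1))) * column(\hat{x},\hat{y},\hat{z}) * row(\hat{x}, \hat{y} - \hat{x} z, -\bar\lambda \hat{z}) be the 3x3 matrix with entries in the noncommutative torus algebra, where \hat{x} = V-V*, \hat{y} = W-W*, \hat{z} = VW*-V*W, z = VW*+V*W. Then e is an idempotent: e^2 = e. -/
/-!
A matrix `t⁻¹ • c rᵀ` built from a column `c` and a row `r` whose product `r ⬝ᵥ c` is the
nonzero scalar `t` is idempotent, since `(c rᵀ)(c rᵀ) = c (r ⬝ᵥ c) rᵀ = t • c rᵀ`. For the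
pillow column and row, moving every `W`, `W*` to the right of every `V`, `V*` with
`VW = λWV` reduces `r ⬝ᵥ c` to `2(λ̄² - 1)`, and this is nonzero because `λ = e^{2πiθ}` is not a
root of unity for irrational `θ`.
-/

open Matrix

theorem Irrational.exp_two_pi_mul_I_pow_ne_one {θ : ℝ} (hθ : Irrational θ) {n : ℕ} (hn : n ≠ 0) :
    Complex.exp (2 * Real.pi * θ * Complex.I) ^ n ≠ 1 := by
  rw [← Complex.exp_nat_mul, ne_eq, Complex.exp_eq_one_iff]
  rintro ⟨k, hk⟩
  have hnθ : ((n * θ : ℝ) : ℂ) = (k : ℝ) := by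
    apply mul_right_cancel₀ (show (2 * Real.pi * Complex.I : ℂ) ≠ 0 by simp [Real.pi_ne_zero])
    push_cast
    linear_combination hk
  exact (hθ.natCast_mul hn).ne_int k (Complex.ofReal_injective hnθ)

theorem isIdempotentElem_inv_smul_vecMulVec {K A n : Type*} [Field K] [Ring A] [Algebra K A]
    [Fintype n] {c r : n → A} {t : K} (ht : t ≠ 0) (hrc : r ⬝ᵥ c = t • (1 : A)) :
    IsIdempotentElem (t⁻¹ • vecMulVec c r) := by
  rw [IsIdempotentElem, smul_mul_smul_comm, vecMulVec_mul_vecMulVec, hrc, smul_one_smul,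
    vecMulVec_smul, smul_smul, mul_assoc, inv_mul_cancel₀ ht, mul_one]

section

variable {K A : Type*} [CommSemiring K] [Semiring A] [Algebra K A] {q : K} {a b : A}

theorem mul_inv_left_eq_smul_of_mul_eq_smul (hab : a * b = q • (b * a)) {a' : A}
    (ha'a : a' * a = 1) (haa' : a * a' = 1) : b * a' = q • (a' * b) := by
  calc b * a' = a' * (a * b) * a' := by rw [← mul_assoc, ha'a, one_mul]
    _ = q • (a' * b) := by
      rw [hab, mul_smul_comm, smul_mul_assoc, mul_assoc, mul_assoc, haa', mul_one]

theorem inv_mul_right_eq_smul_of_mul_eq_smul (hab : a * b = q • (b * a)) {b' : A}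
    (hb'b : b' * b = 1) (hbb' : b * b' = 1) : b' * a = q • (a * b') := by
  calc b' * a = b' * (a * b) * b' := by rw [mul_assoc, mul_assoc, hbb', mul_one]
    _ = q • (a * b') := by
      rw [hab, mul_smul_comm, smul_mul_assoc, ← mul_assoc, hb'b, one_mul]

end

theorem ncTorus_row_dotProduct_col {A : Type*} [Ring A] [Algebra ℂ A] {lam : ℂ} (hlam : lam ≠ 0)
    {V Vs W Ws : A} (hVVs : V * Vs = 1) (hVsV : Vs * V = 1) (hWWs : W * Ws = 1)
    (hWsW : Ws * W = 1) (hcomm : V * W = lam • (W * V)) :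
    ![V - Vs, (W - Ws) - (V - Vs) * (V * Ws + Vs * W), -(lam⁻¹ • (V * Ws - Vs * W))] ⬝ᵥ
      ![V - Vs, W - Ws, V * Ws - Vs * W] = (2 * (lam⁻¹ ^ 2 - 1)) • (1 : A) := by
  have hWV : W * V = lam⁻¹ • (V * W) := (eq_inv_smul_iff₀ hlam).2 hcomm.symm
  have hWVs : W * Vs = lam • (Vs * W) := mul_inv_left_eq_smul_of_mul_eq_smul hcomm hVsV hVVs
  have hWsV : Ws * V = lam • (V * Ws) := inv_mul_right_eq_smul_of_mul_eq_smul hcomm hWsW hWWs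
  have hWsVs : Ws * Vs = lam⁻¹ • (Vs * Ws) :=
    (eq_inv_smul_iff₀ hlam).2 (mul_inv_left_eq_smul_of_mul_eq_smul hWVs hWsW hWWs).symm
  have assoc {a b c : A} (h : a * b = c) (x : A) : a * (b * x) = c * x := by
    rw [← mul_assoc, h]
  simp only [dotProduct, Fin.sum_univ_three, cons_val_zero, cons_val_one, cons_val_two,
    head_cons, tail_cons, mul_sub, sub_mul, mul_add, add_mul, neg_mul, smul_mul_assoc,
    mul_smul_comm, smul_smul, mul_assoc, hVVs, hVsV, hWWs, hWsW, assoc hVVs, assoc hVsV,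
    assoc hWV, assoc hWVs, assoc hWsV, assoc hWsVs, mul_one, one_mul, inv_mul_cancel₀ hlam,
    one_smul, smul_sub]
  module

/-- the 3×3 matrix
`e = (1/(2(λ̄²-1))) ⬝ col(x̂,ŷ,ẑ) ⬝ row(x̂, ŷ - x̂z, -λ̄ẑ)`
with entries in the noncommutative torus algebra is an idempotent, where
`x̂ = V-V*`, `ŷ = W-W*`, `ẑ = VW*-V*W`, `z = VW*+V*W`, `λ̄ = λ⁻¹`,
`λ = e^{2πiθ}` and `θ` is irrational. -/
theorem ncTorus_pillow_idempotent (A : Type*) [Ring A] [Algebra ℂ A] (θ : ℝ)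
    (hθ : Irrational θ) (lam : ℂ)
    (hlam : lam = Complex.exp (2 * Real.pi * θ * Complex.I))
    (V Vs W Ws : A)
    (hVVs : V * Vs = 1) (hVsV : Vs * V = 1)
    (hWWs : W * Ws = 1) (hWsW : Ws * W = 1)
    (hcomm : V * W = lam • (W * V))
    (e : Matrix (Fin 3) (Fin 3) A)
    (he : e = fun i j =>
      (2 * (lam⁻¹ ^ 2 - 1))⁻¹ •
        ((![V - Vs, W - Ws, V * Ws - Vs * W] i) *
         (![V - Vs, (W - Ws) - (V - Vs) * (V * Ws + Vs * W),
            -(lam⁻¹ • (V * Ws - Vs * W))] j))) :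
    e * e = e := by
  have hlam0 : lam ≠ 0 := hlam ▸ Complex.exp_ne_zero _
  have hlam2 : lam⁻¹ ^ 2 ≠ 1 := by
    rw [inv_pow, inv_ne_one, hlam]
    exact hθ.exp_two_pi_mul_I_pow_ne_one two_ne_zero
  subst he
  exact isIdempotentElem_inv_smul_vecMulVec (mul_ne_zero two_ne_zero (sub_ne_zero.2 hlam2))
    (ncTorus_row_dotProduct_col hlam0 hVVs hVsV hWWs hWsW hcomm)
end
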